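/- Assume the standing hypotheses, let x ∈ ℕ₀ with x = α·a + β·c for some α, β ∈ ℕ₀ with 0 ≤ α < c, and suppose β < a. Then for every nonnegative integer y with b·x ≤ a·y, the element (x,y) lies in S and all of its factorizations have the same length: if (p,q,r) and (p',q',r') ∈ ℕ₀³ both satisfy p·u + q·v + r·w = (x,y), then p+q+r = p'+q'+r'. In particular ρ((x,y)) = 1. -/

import Mathlib

/-! Since `b * c - a * d = 1`, the integers `a` and `c` are coprime. If `(p, q, r)` factors
`(α * a + β * c, y)`, then `q * a + r * c = α * a + β * c`; reducing modulo `c` and modulo `a`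
gives `q ≡ α [MOD c]` and `r ≡ β [MOD a]`, so `q ≥ α` and `r ≥ β` by the bounds on `α` and `β`,
and then equality of the sums forces `q = α` and `r = β`. The second coordinate then pins down
`p`, so `(x, y)` has exactly one factorization. It exists because
`a * (α * b + β * d) + β = b * x ≤ a * y`. -/

theorem Nat.coprime_of_mul_eq_mul_add_one {a b c d : ℕ} (h : b * c = a * d + 1) :
    Nat.Coprime a c :=
  Nat.isCoprime_iff_coprime.mp
    ⟨-(d : ℤ), b, by linear_combination (by exact_mod_cast h : (b * c : ℤ) = a * d + 1)⟩

theorem Nat.Coprime.eq_and_eq_of_mul_add_mul_eq {a c α β q r : ℕ} (hac : Nat.Coprime a c)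
    (hα : α < c) (hβ : β < a) (h : q * a + r * c = α * a + β * c) : q = α ∧ r = β := by
  have hqα : q ≡ α [MOD c] := Nat.ModEq.cancel_right_of_coprime hac.symm <| by
    simpa [Nat.ModEq, Nat.add_mul_mod_self_right] using congrArg (· % c) h
  have hrβ : r ≡ β [MOD a] := Nat.ModEq.cancel_right_of_coprime hac <| by
    simpa [Nat.ModEq, Nat.add_mul_mod_self_right, Nat.mul_mod_left] using congrArg (· % a) h
  have hαq : α ≤ q := calc
    α = q % c := by rw [hqα, Nat.mod_eq_of_lt hα]
    _ ≤ q := Nat.mod_le q c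
  have hβr : β ≤ r := calc
    β = r % a := by rw [hrβ, Nat.mod_eq_of_lt hβ]
    _ ≤ r := Nat.mod_le r a
  have hqa : q * a = α * a := by
    linarith [Nat.mul_le_mul_right a hαq, Nat.mul_le_mul_right c hβr]
  have hrc : r * c = β * c := by
    linarith [Nat.mul_le_mul_right a hαq, Nat.mul_le_mul_right c hβr]
  exact ⟨Nat.eq_of_mul_eq_mul_right (Nat.zero_lt_of_lt hβ) hqa,
    Nat.eq_of_mul_eq_mul_right (Nat.zero_lt_of_lt hα) hrc⟩

theorem Prod.nsmul_add_nsmul_add_nsmul_eq_iff {a b c d p q r x y : ℕ} :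
    p • ((0 : ℕ), (1 : ℕ)) + q • ((a, b) : ℕ × ℕ) + r • ((c, d) : ℕ × ℕ) = (x, y) ↔
      q * a + r * c = x ∧ p + q * b + r * d = y := by
  simp only [Prod.smul_mk, smul_eq_mul, Prod.mk_add_mk, Prod.mk.injEq]
  constructor <;> rintro ⟨h₁, h₂⟩ <;> constructor <;> linarith

theorem AddSubmonoid.nsmul_add_nsmul_add_nsmul_mem_closure {M : Type*} [AddMonoid M]
    (u v w : M) (p q r : ℕ) : p • u + q • v + r • w ∈ AddSubmonoid.closure {u, v, w} := by
  have mem : ∀ z ∈ ({u, v, w} : Set M), z ∈ AddSubmonoid.closure {u, v, w} :=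
    fun _ hz => AddSubmonoid.subset_closure hz
  exact add_mem (add_mem (nsmul_mem (mem u (by simp)) p) (nsmul_mem (mem v (by simp)) q))
    (nsmul_mem (mem w (by simp)) r)

theorem mul_add_mul_le_of_mul_le {a b c d α β y : ℕ} (hstar : b * c = a * d + 1) (hβ : β < a)
    (hy : b * (α * a + β * c) ≤ a * y) : α * b + β * d ≤ y := by
  have key : a * (α * b + β * d) + β = b * (α * a + β * c) := by
    linear_combination β * hstar.symm
  exact Nat.le_of_mul_le_mul_left (by omega : a * (α * b + β * d) ≤ a * y)
    (Nat.zero_lt_of_lt hβ)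

theorem embdim3_elasticity_one_of_small_beta_general (a b c d : ℕ)
    (hstar : b * c = a * d + 1)
    (x α β : ℕ) (hx : x = α * a + β * c) (hα : α < c) (hβ : β < a) :
    ∀ y : ℕ, b * x ≤ a * y →
      (x, y) ∈ AddSubmonoid.closure
          ({((0 : ℕ), (1 : ℕ)), (a, b), (c, d)} : Set (ℕ × ℕ)) ∧
        ∀ p q r p' q' r' : ℕ,
          p • ((0 : ℕ), (1 : ℕ)) + q • ((a, b) : ℕ × ℕ) + r • ((c, d) : ℕ × ℕ) = (x, y) →
          p' • ((0 : ℕ), (1 : ℕ)) + q' • ((a, b) : ℕ × ℕ) + r' • ((c, d) : ℕ × ℕ) = (x, y) →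
            p + q + r = p' + q' + r' := by
  intro y hy
  have hlength : ∀ p q r : ℕ,
      p • ((0 : ℕ), (1 : ℕ)) + q • ((a, b) : ℕ × ℕ) + r • ((c, d) : ℕ × ℕ) = (x, y) →
        p + q + r = y - (α * b + β * d) + α + β := by
    intro p q r h
    obtain ⟨hxqr, hyp⟩ := Prod.nsmul_add_nsmul_add_nsmul_eq_iff.mp h
    obtain ⟨rfl, rfl⟩ := (Nat.coprime_of_mul_eq_mul_add_one hstar).eq_and_eq_of_mul_add_mul_eq
      hα hβ (hxqr.trans hx)
    omega
  refine ⟨?_, fun p q r p' q' r' h h' => (hlength p q r h).trans (hlength p' q' r' h').symm⟩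
  have hle : α * b + β * d ≤ y := mul_add_mul_le_of_mul_le hstar hβ (hx ▸ hy)
  convert AddSubmonoid.nsmul_add_nsmul_add_nsmul_mem_closure ((0 : ℕ), (1 : ℕ))
    ((a, b) : ℕ × ℕ) (c, d) (y - (α * b + β * d)) α β using 1
  rw [eq_comm, Prod.nsmul_add_nsmul_add_nsmul_eq_iff]
  omega

/-- Standing hypotheses; fix x = α·a + β·c with 0 ≤ α < c and β < a.  Then for
every y with b·x ≤ a·y, the element (x,y) lies in S and all of its
factorizations have the same length; in particular ρ((x,y)) = 1. -/
theorem embdim3_elasticity_one_of_small_beta (a b c d : ℕ) (ha : 0 < a)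
    (hb : 0 < b) (hc : 0 < c) (hstar : b * c = a * d + 1)
    (x α β : ℕ) (hx : x = α * a + β * c) (hα : α < c) (hβ : β < a) :
    ∀ y : ℕ, b * x ≤ a * y →
      (x, y) ∈ AddSubmonoid.closure
          ({((0 : ℕ), (1 : ℕ)), (a, b), (c, d)} : Set (ℕ × ℕ)) ∧
        ∀ p q r p' q' r' : ℕ,
          p • ((0 : ℕ), (1 : ℕ)) + q • ((a, b) : ℕ × ℕ) + r • ((c, d) : ℕ × ℕ) = (x, y) →
          p' • ((0 : ℕ), (1 : ℕ)) + q' • ((a, b) : ℕ × ℕ) + r' • ((c, d) : ℕ × ℕ) = (x, y) →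
            p + q + r = p' + q' + r' :=
  embdim3_elasticity_one_of_small_beta_general a b c d hstar x α β hx hα hβ
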